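/- arXiv:2512.03865 — 3 statements merged into one kernel-verified Lean document; each statement's English description precedes it below -/
import Mathlib

section
/- For every ω ∈ ℝ and every C¹ function φ : ℝ/ℤ → ℝ with φ' > −1, there exists a potential V : ℝ/ℤ → ℝ, unique up to an additive constant, such that V'(t+φ(t)) = φ(t+ω) − 2φ(t) + φ(t−ω) for all t ∈ ℝ/ℤ. Consequently the standard map associated with V admits a rotational invariant curve, parametrized by t ↦ (u(t), v(t)) with u = id + φ and v(t) = ω + φ(t) − φ(t−ω), on which its dynamics is conjugated to the rigid rotation R_ω : x ↦ x+ω by the circle diffeomorphism u. The essential point is that the function w = (φ∘R_ω − 2φ + φ∘R_{−ω})∘u^{−1} has zero average over ℝ/ℤ. -/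
/-!
With `u = id + φ` and `g = φ∘R_ω − 2φ + φ∘R_{−ω}`, the condition on the potential reads
`V' ∘ u = g`. As `φ` is periodic and `φ' > −1`, `u` is an increasing homeomorphism of `ℝ`
commuting with `x ↦ x + 1`, so `V' = w := g ∘ u⁻¹` is forced, and a periodic primitive of `w`
exists exactly when `w` has zero average. Substituting `x = u t` turns that average into
`∫₀¹ g (1 + φ')`. Writing `D = φ∘R_ω − φ`, we have `g = D − D∘R_{−ω}`, and shifting the second
term by `ω` gives `∫₀¹ g (1 + φ') = −∫₀¹ D' D = 0`.
-/

open Real Set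

noncomputable section

/-- Lift of the (Chirikov) standard map associated with the potential `V`. -/
def stdMap (V : ℝ → ℝ) : ℝ × ℝ → ℝ × ℝ :=
  fun z => (z.1 + z.2 + deriv V z.1, z.2 + deriv V z.1)

open Function Filter

def secondDiff (ω : ℝ) (φ : ℝ → ℝ) (t : ℝ) : ℝ := φ (t + ω) - 2 * φ t + φ (t - ω)

@[fun_prop]
lemma Continuous.secondDiff {ω : ℝ} {φ : ℝ → ℝ} (hφ : Continuous φ) :
    Continuous (secondDiff ω φ) := by
  unfold _root_.secondDiff
  fun_prop

lemma Function.Periodic.deriv {f : ℝ → ℝ} {T : ℝ} (hf : Periodic f T) :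
    Periodic (deriv f) T := fun x => by
  rw [← deriv_comp_add_const, hf.funext]

lemma Function.Periodic.secondDiff {ω T : ℝ} {φ : ℝ → ℝ} (hφ : Periodic φ T) :
    Periodic (secondDiff ω φ) T := fun t => by
  simp only [_root_.secondDiff]
  rw [add_right_comm t T ω, add_sub_right_comm t T ω, hφ, hφ, hφ]

namespace Function.Periodic

variable {f : ℝ → ℝ} {T : ℝ}

lemma intervalIntegral_comp_add_right (hf : Periodic f T) (a c : ℝ) :
    ∫ x in a..a + T, f (x + c) = ∫ x in a..a + T, f x := by
  rw [intervalIntegral.integral_comp_add_right, add_right_comm, hf.intervalIntegral_add_eq]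

lemma intervalIntegral_deriv_mul_self_eq_zero {f' : ℝ → ℝ} (hf : Periodic f T)
    (hderiv : ∀ x, HasDerivAt f (f' x) x) (hf' : Continuous f') (a : ℝ) :
    ∫ x in a..a + T, f' x * f x = 0 := by
  have h := intervalIntegral.integral_deriv_mul_eq_sub (a := a) (b := a + T)
    (fun x _ => hderiv x) (fun x _ => hderiv x) (hf'.intervalIntegrable _ _)
    (hf'.intervalIntegrable _ _)
  simp_rw [hf a, sub_self, mul_comm (f _) (f' _), ← two_mul,
    intervalIntegral.integral_const_mul] at h
  simpa using h

lemma surjective_id_add (hf : Periodic f T) (hT : T ≠ 0) (hc : Continuous f) :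
    Surjective fun t => t + f t := by
  obtain ⟨C, hC⟩ := isBounded_iff_forall_norm_le.1 (hf.isBounded_of_continuous hT hc)
  have hbound : ∀ t, |f t| ≤ C := fun t => hC _ (mem_range_self t)
  exact (continuous_id.add hc).surjective
    (tendsto_atTop_add_right_of_le _ (-C) tendsto_id fun t => neg_le_of_abs_le (hbound t))
    (tendsto_atBot_add_right_of_ge _ C tendsto_id fun t => le_of_abs_le (hbound t))

lemma periodic_primitive_of_integral_eq_zero (hf : Periodic f T) (hc : Continuous f)
    (hzero : ∫ x in (0 : ℝ)..T, f x = 0) :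
    Periodic (fun x => ∫ s in (0 : ℝ)..x, f s) T := fun x => by
  show ∫ s in (0 : ℝ)..x + T, f s = _
  rw [hf.intervalIntegral_add_eq_add 0 x fun _ _ => hc.intervalIntegrable _ _, zero_add, hzero,
    add_zero]

lemma intervalIntegral_comp_mul_deriv {u u' : ℝ → ℝ} (hf : Periodic f 1) (hc : Continuous f)
    (hu : ∀ t, HasDerivAt u (u' t) t) (hu' : Continuous u') (hu1 : u 1 = u 0 + 1) :
    ∫ t in (0 : ℝ)..1, f (u t) * u' t = ∫ x in (0 : ℝ)..1, f x := by
  have h := intervalIntegral.integral_comp_mul_deriv (a := 0) (b := 1) (fun t _ => hu t)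
    hu'.continuousOn hc
  rwa [hu1, hf.intervalIntegral_add_eq (u 0) 0, zero_add] at h

lemma comp_orderIso_symm {g φ : ℝ → ℝ} (hg : Periodic g T)
    (hφ : Periodic φ T) (e : ℝ ≃o ℝ) (he : ∀ t, e t = t + φ t) :
    Periodic (fun x => g (e.symm x)) T := fun x => by
  have hsymm : e.symm (x + T) = e.symm x + T := by
    refine e.symm_apply_eq.2 ?_
    conv_lhs => rw [← e.apply_symm_apply x]
    rw [he, he, hφ]
    ring
  simp only [hsymm, hg _]

end Function.Periodic

theorem exists_orderIso_eq_id_add {T : ℝ} {φ : ℝ → ℝ} (hφ : Periodic φ T) (hT : T ≠ 0)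
    (hd : Differentiable ℝ φ) (hφ' : ∀ t, -1 < deriv φ t) :
    ∃ e : ℝ ≃o ℝ, ∀ t, e t = t + φ t := by
  have hmono : StrictMono fun t => t + φ t := strictMono_of_deriv_pos fun t => by
    rw [((hasDerivAt_id' t).fun_add (hd t).hasDerivAt).deriv]
    linarith [hφ' t]
  exact ⟨StrictMono.orderIsoOfSurjective _ hmono (hφ.surjective_id_add hT hd.continuous),
    fun _ => rfl⟩

theorem intervalIntegral_secondDiff_mul_one_add_deriv_eq_zero {ω : ℝ} {φ : ℝ → ℝ}
    (hφ : Periodic φ 1) (hC1 : ContDiff ℝ 1 φ) :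
    ∫ t in (0 : ℝ)..1, secondDiff ω φ t * (1 + deriv φ t) = 0 := by
  have hφd : Differentiable ℝ φ := hC1.differentiable one_ne_zero
  have hφ'c : Continuous (deriv φ) := hC1.continuous_deriv le_rfl
  set D : ℝ → ℝ := fun t => φ (t + ω) - φ t
  have hD : Periodic D 1 := fun t => by simp only [D, add_right_comm t 1 ω, hφ _]
  have hD' : ∀ t, HasDerivAt D (deriv φ (t + ω) - deriv φ t) t := fun t =>
    ((hφd _).hasDerivAt.comp_add_const t ω).sub (hφd t).hasDerivAt
  have hshift : ∫ t in (0 : ℝ)..1, D (t - ω) * (1 + deriv φ t) =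
      ∫ t in (0 : ℝ)..1, D t * (1 + deriv φ (t + ω)) := by
    have hper : Periodic (fun t => D t * (1 + deriv φ (t + ω))) 1 := fun t => by
      simp only [hD t, add_right_comm t 1 ω, hφ.deriv _]
    simpa [← sub_eq_add_neg] using hper.intervalIntegral_comp_add_right 0 (-ω)
  have hint : ∀ g : ℝ → ℝ, Continuous g → IntervalIntegrable g MeasureTheory.volume 0 1 :=
    fun g hg => hg.intervalIntegrable 0 1
  calc ∫ t in (0 : ℝ)..1, secondDiff ω φ t * (1 + deriv φ t)
      = (∫ t in (0 : ℝ)..1, D t * (1 + deriv φ t)) -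
          ∫ t in (0 : ℝ)..1, D (t - ω) * (1 + deriv φ t) := by
        rw [← intervalIntegral.integral_sub (hint _ (by fun_prop)) (hint _ (by fun_prop))]
        congr 1 with t
        simp only [secondDiff, D, sub_add_cancel]
        ring
    _ = (∫ t in (0 : ℝ)..1, D t * (1 + deriv φ t)) -
          ∫ t in (0 : ℝ)..1, D t * (1 + deriv φ (t + ω)) := by rw [hshift]
    _ = -∫ t in (0 : ℝ)..1, (deriv φ (t + ω) - deriv φ t) * D t := by
        rw [← intervalIntegral.integral_sub (hint _ (by fun_prop)) (hint _ (by fun_prop)),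
          ← intervalIntegral.integral_neg]
        congr 1 with t
        ring
    _ = 0 := by simpa using hD.intervalIntegral_deriv_mul_self_eq_zero hD' (by fun_prop) 0

theorem intervalIntegral_secondDiff_comp_symm_eq_zero {ω : ℝ} {φ : ℝ → ℝ} (hφ : Periodic φ 1)
    (hC1 : ContDiff ℝ 1 φ) (e : ℝ ≃o ℝ) (he : ∀ t, e t = t + φ t) :
    ∫ x in (0 : ℝ)..1, secondDiff ω φ (e.symm x) = 0 := by
  have he' : ∀ t, HasDerivAt e (1 + deriv φ t) t := fun t => by
    rw [show ⇑e = fun t => t + φ t from funext he]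
    exact (hasDerivAt_id' t).fun_add ((hC1.differentiable one_ne_zero) t).hasDerivAt
  have he1 : e 1 = e 0 + 1 := by
    rw [he, he]
    linarith [show φ 1 = φ 0 by simpa using hφ 0]
  rw [← (hφ.secondDiff.comp_orderIso_symm hφ e he).intervalIntegral_comp_mul_deriv
    (hC1.continuous.secondDiff.comp e.symm.continuous) he' (by fun_prop) he1]
  simpa using intervalIntegral_secondDiff_mul_one_add_deriv_eq_zero hφ hC1

theorem stdMap_apply_of_deriv_eq_secondDiff {V φ : ℝ → ℝ} {ω t : ℝ}
    (hV : deriv V (t + φ t) = secondDiff ω φ t) :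
    stdMap V (t + φ t, ω + φ t - φ (t - ω)) =
      ((t + ω) + φ (t + ω), ω + φ (t + ω) - φ ((t + ω) - ω)) := by
  simp only [stdMap, hV, secondDiff, add_sub_cancel_right, Prod.mk.injEq]
  constructor <;> ring

/-- **Lemma (standard map with a prescribed RIC).** -/
theorem standard_map_with_prescribed_invariant_curve
    (ω : ℝ) (φ : ℝ → ℝ)
    (hper : ∀ t, φ (t + 1) = φ t)
    (hC1 : ContDiff ℝ 1 φ)
    (hφ' : ∀ t, -1 < deriv φ t) :
    -- existence of the potential
    (∃ V : ℝ → ℝ, (∀ x, V (x + 1) = V x) ∧ Differentiable ℝ V ∧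
        ∀ t, deriv V (t + φ t) = φ (t + ω) - 2 * φ t + φ (t - ω)) ∧
    -- uniqueness of the potential up to an additive constant
    (∀ V₁ V₂ : ℝ → ℝ,
        ((∀ x, V₁ (x + 1) = V₁ x) ∧ Differentiable ℝ V₁ ∧
          ∀ t, deriv V₁ (t + φ t) = φ (t + ω) - 2 * φ t + φ (t - ω)) →
        ((∀ x, V₂ (x + 1) = V₂ x) ∧ Differentiable ℝ V₂ ∧
          ∀ t, deriv V₂ (t + φ t) = φ (t + ω) - 2 * φ t + φ (t - ω)) →
        ∃ c : ℝ, ∀ x, V₁ x = V₂ x + c) ∧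
    -- the curve `t ↦ (u(t), v(t))` is invariant and conjugates the dynamics to `R_ω`
    (∀ V : ℝ → ℝ, (∀ x, V (x + 1) = V x) → Differentiable ℝ V →
        (∀ t, deriv V (t + φ t) = φ (t + ω) - 2 * φ t + φ (t - ω)) →
        ∀ t, stdMap V (t + φ t, ω + φ t - φ (t - ω)) =
          ((t + ω) + φ (t + ω), ω + φ (t + ω) - φ ((t + ω) - ω))) ∧
    -- the function `w` with `w ∘ (id + φ) = φ∘R_ω − 2φ + φ∘R_{−ω}` has zero average
    (∀ w : ℝ → ℝ, (∀ t, w (t + φ t) = φ (t + ω) - 2 * φ t + φ (t - ω)) →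
        ∫ x in (0:ℝ)..1, w x = 0) := by
  have hper : Periodic φ 1 := hper
  obtain ⟨e, he⟩ := exists_orderIso_eq_id_add hper one_ne_zero
    (hC1.differentiable one_ne_zero) hφ'
  set w : ℝ → ℝ := fun x => secondDiff ω φ (e.symm x)
  have hw_unique : ∀ f : ℝ → ℝ, (∀ t, f (t + φ t) = secondDiff ω φ t) → f = w :=
    fun f hf => funext fun x => by
      change f x = secondDiff ω φ (e.symm x)
      rw [← hf, ← he, e.apply_symm_apply]
  have hwc : Continuous w := hC1.continuous.secondDiff.comp e.symm.continuous
  have hwper : Periodic w 1 := hper.secondDiff.comp_orderIso_symm hper e he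
  have hw_avg : ∫ x in (0 : ℝ)..1, w x = 0 :=
    intervalIntegral_secondDiff_comp_symm_eq_zero hper hC1 e he
  set V : ℝ → ℝ := fun x => ∫ s in (0 : ℝ)..x, w s
  have hV : ∀ x, HasDerivAt V (w x) x := fun x => (hwc.integral_hasStrictDerivAt 0 x).hasDerivAt
  refine ⟨⟨V, hwper.periodic_primitive_of_integral_eq_zero hwc hw_avg,
    fun x => (hV x).differentiableAt, fun t => ?_⟩, ?_,
    fun _ _ _ hV' t => stdMap_apply_of_deriv_eq_secondDiff (hV' t),
    fun w' hw' => hw_unique w' hw' ▸ hw_avg⟩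
  · rw [(hV _).deriv, ← he]
    exact congrArg (secondDiff ω φ) (e.symm_apply_apply t)
  · rintro V₁ V₂ ⟨-, hV₁, hV₁'⟩ ⟨-, hV₂, hV₂'⟩
    obtain ⟨c, hc⟩ := isOpen_univ.exists_eq_add_of_deriv_eq isPreconnected_univ
      hV₁.differentiableOn hV₂.differentiableOn fun x _ => by
        rw [hw_unique _ hV₁', hw_unique _ hV₂']
    exact ⟨c, fun x => hc (mem_univ x)⟩
end
end

section
/- Let R > 0 and let η₀, η₁ : D_R → ℂ be bounded analytic functions with η₀(0) = 0 and η₀'(0) ≠ 0. Set r_j = R^{−1} sup{|η_j(z)| : |z| < R} for j = 0,1. There is a universal constant c > 0 (one may take c = 1/32) such that if r₀r₁ < c|η₀'(0)|², then η₀ + η₁ has a unique zero x in the open disc of radius R̄ = 2c(|η₀'(0)|/r₀)R centered at 0, and this zero satisfies |x|/R ≤ C r₁/|η₀'(0)| and |η₀'(x) + η₁'(x) − η₀'(0)| ≤ C r₀r₁/|η₀'(0)| for a universal constant C. -/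
/-!
Cauchy's estimate gives `‖η₀'(0)‖ ≤ r₀`, and Schwarz's lemma applied to `η₀' - η₀'(0)` on the
disc of radius `R / 2` gives `‖η₀'(z) - η₀'(0)‖ ≤ 6 r₀ ‖z‖ / R`, while `‖η₁'‖ ≤ 2 r₁` there.
Hence on the closed disc of radius `ρ = ‖η₀'(0)‖ R / (16 r₀)` the derivative of `η₀ + η₁` stays
within `‖η₀'(0)‖ / 2` of `η₀'(0)`, so the Newton map `z ↦ z - (η₀ + η₁) z / η₀'(0)` is a
`1/2`-contraction of this disc into itself. Its fixed point is the zero `x`, with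
`‖x‖ ≤ 2 ‖η₁ 0‖ / ‖η₀'(0)‖`, and the derivative bound at `x` is the estimate above.
-/

open Metric

noncomputable section

/-- `r_j = R⁻¹ sup{|η(z)| : |z| < R}`. -/
def scaledSup (R : ℝ) (η : ℂ → ℂ) : ℝ :=
  R⁻¹ * sSup ((fun z => ‖η z‖) '' ball (0 : ℂ) R)

open Set Function
open scoped NNReal

section Contraction

variable {E : Type*} [NormedAddCommGroup E] {F : E → E} {K : ℝ≥0} {ρ : ℝ}

theorem norm_le_of_lipschitzOnWith_closedBall (hF : LipschitzOnWith K F (closedBall 0 ρ))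
    {z : E} (hz : z ∈ closedBall 0 ρ) : ‖F z‖ ≤ K * ‖z‖ + ‖F 0‖ := by
  have h0 : (0 : E) ∈ closedBall 0 ρ := mem_closedBall_self (dist_nonneg.trans hz)
  calc ‖F z‖ ≤ ‖F z - F 0‖ + ‖F 0‖ := norm_le_norm_sub_add _ _
    _ ≤ K * ‖z‖ + ‖F 0‖ := by
      gcongr
      simpa [dist_eq_norm] using hF.dist_le_mul z hz 0 h0

theorem mapsTo_closedBall_of_lipschitzOnWith (hF : LipschitzOnWith K F (closedBall 0 ρ))
    (h0 : ‖F 0‖ ≤ (1 - K) * ρ) : MapsTo F (closedBall 0 ρ) (closedBall 0 ρ) := by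
  intro z hz
  rw [mem_closedBall_zero_iff] at hz ⊢
  have := norm_le_of_lipschitzOnWith_closedBall hF (mem_closedBall_zero_iff.2 hz)
  nlinarith [K.coe_nonneg]

theorem exists_isFixedPt_of_lipschitzOnWith_closedBall [CompleteSpace E] (hK : K < 1)
    (hF : LipschitzOnWith K F (closedBall 0 ρ)) (h0 : ‖F 0‖ ≤ (1 - K) * ρ) :
    ∃ x ∈ closedBall (0 : E) ρ, IsFixedPt F x := by
  have hρ : 0 ≤ ρ := nonneg_of_mul_nonneg_right ((norm_nonneg _).trans h0)
    (sub_pos.2 (NNReal.coe_lt_one.2 hK))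
  have hmaps := mapsTo_closedBall_of_lipschitzOnWith hF h0
  obtain ⟨x, hx, hFx, -⟩ := ContractingWith.exists_fixedPoint' isClosed_closedBall.isComplete
    hmaps ⟨hK, hF.mapsToRestrict hmaps⟩ (mem_closedBall_self hρ) (edist_ne_top _ _)
  exact ⟨x, hx, hFx⟩

theorem LipschitzOnWith.eq_of_isFixedPt {s : Set E} (hK : K < 1) (hF : LipschitzOnWith K F s)
    {x y : E} (hx : x ∈ s) (hy : y ∈ s) (hFx : IsFixedPt F x) (hFy : IsFixedPt F y) :
    x = y := by
  have h := hF.dist_le_mul x hx y hy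
  rw [hFx.eq, hFy.eq] at h
  have : dist x y ≤ 0 := by nlinarith [dist_nonneg (x := x) (y := y), NNReal.coe_lt_one.2 hK]
  exact dist_le_zero.1 this

theorem norm_le_div_of_isFixedPt (hK : K < 1) (hF : LipschitzOnWith K F (closedBall 0 ρ))
    {x : E} (hx : x ∈ closedBall 0 ρ) (hFx : IsFixedPt F x) : ‖x‖ ≤ ‖F 0‖ / (1 - K) := by
  have h := norm_le_of_lipschitzOnWith_closedBall hF hx
  rw [hFx.eq] at h
  rw [le_div_iff₀ (sub_pos.2 (NNReal.coe_lt_one.2 hK))]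
  linarith

end Contraction

section Newton

variable {𝕜 : Type*} [RCLike 𝕜] {g g' : 𝕜 → 𝕜} {d : 𝕜} {K : ℝ≥0}

theorem lipschitzOnWith_sub_div_of_norm_sub_le {s : Set 𝕜} (hs : Convex ℝ s) (hd : d ≠ 0)
    (hg : ∀ z ∈ s, HasDerivAt g (g' z) z) (hg' : ∀ z ∈ s, ‖g' z - d‖ ≤ K * ‖d‖) :
    LipschitzOnWith K (fun z => z - g z / d) s := by
  refine hs.lipschitzOnWith_of_nnnorm_hasDerivWithin_le (f' := fun z => 1 - g' z / d)
    (fun z hz => ((hasDerivAt_id z).sub ((hg z hz).div_const d)).hasDerivWithinAt)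
    fun z hz => ?_
  have hd' : 0 < ‖d‖ := norm_pos_iff.2 hd
  rw [← NNReal.coe_le_coe, coe_nnnorm, show 1 - g' z / d = -((g' z - d) / d) by field_simp; ring,
    norm_neg, norm_div, div_le_iff₀ hd']
  exact hg' z hz

theorem exists_unique_zero_of_norm_deriv_sub_le {ρ : ℝ} (hK : K < 1) (hd : d ≠ 0)
    (hg : ∀ z ∈ closedBall 0 ρ, HasDerivAt g (g' z) z)
    (hg' : ∀ z ∈ closedBall 0 ρ, ‖g' z - d‖ ≤ K * ‖d‖) (h0 : ‖g 0‖ ≤ (1 - K) * ‖d‖ * ρ) :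
    ∃ x, ‖x‖ ≤ ‖g 0‖ / ((1 - K) * ‖d‖) ∧ g x = 0 ∧
      ∀ y ∈ closedBall 0 ρ, g y = 0 → y = x := by
  have hd' : 0 < ‖d‖ := norm_pos_iff.2 hd
  have hF := lipschitzOnWith_sub_div_of_norm_sub_le (convex_closedBall 0 ρ) hd hg hg'
  have hfix : ∀ z, IsFixedPt (fun z => z - g z / d) z ↔ g z = 0 := by
    simp [IsFixedPt, hd]
  have hF0 : ‖(fun z => z - g z / d) 0‖ = ‖g 0‖ / ‖d‖ := by simp
  obtain ⟨x, hx, hFx⟩ := exists_isFixedPt_of_lipschitzOnWith_closedBall hK hF <| by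
    rw [hF0, div_le_iff₀ hd']; linarith
  refine ⟨x, ?_, (hfix x).1 hFx, fun y hy hy0 => hF.eq_of_isFixedPt hK hy hx ((hfix y).2 hy0) hFx⟩
  simpa [hF0, div_div, mul_comm] using norm_le_div_of_isFixedPt hK hF hx hFx

end Newton

section CauchyEstimates

variable {E : Type*} [NormedAddCommGroup E] [NormedSpace ℂ E] {f : ℂ → E} {R r : ℝ}

theorem norm_le_mul_norm_of_norm_le_mul (hf : DifferentiableOn ℂ f (ball 0 R)) (h0 : f 0 = 0)
    (hr : ∀ w ∈ ball 0 R, ‖f w‖ ≤ r * R) {z : ℂ} (hz : z ∈ ball 0 R) : ‖f z‖ ≤ r * ‖z‖ := by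
  have hR : R ≠ 0 := (pos_of_mem_ball hz).ne'
  have := Complex.dist_le_div_mul_dist_of_mapsTo_ball hf
    (fun w hw => by simpa [h0] using hr w hw) hz
  rwa [mul_div_cancel_right₀ _ hR, h0, dist_zero_right, dist_zero_right] at this

theorem norm_deriv_zero_le_of_norm_le_mul (hf : DifferentiableOn ℂ f (ball 0 R)) (h0 : f 0 = 0)
    (hr : ∀ w ∈ ball 0 R, ‖f w‖ ≤ r * R) (hR : 0 < R) : ‖deriv f 0‖ ≤ r := by
  have := Complex.norm_deriv_le_div_of_mapsTo_ball hf
    (fun w hw => by simpa [h0] using hr w hw) hR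
  rwa [mul_div_cancel_right₀ _ hR.ne'] at this

theorem norm_deriv_le_of_norm_le_mul (hf : DifferentiableOn ℂ f (ball 0 R))
    (hr : ∀ w ∈ ball 0 R, ‖f w‖ ≤ r * R) {z : ℂ} {t : ℝ} (ht : 0 < t) (hzt : ‖z‖ + t < R) :
    ‖deriv f z‖ ≤ r * R / t := by
  have hsub : closedBall z t ⊆ ball 0 R := closedBall_subset_ball' (by simpa [add_comm] using hzt)
  exact Complex.norm_deriv_le_of_forall_mem_sphere_norm_le ht (hf.diffContOnCl_ball hsub)
    fun w hw => hr w (hsub (sphere_subset_closedBall hw))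

theorem norm_deriv_sub_deriv_zero_le [CompleteSpace E] (hf : DifferentiableOn ℂ f (ball 0 R))
    (h0 : f 0 = 0) (hr : ∀ w ∈ ball 0 R, ‖f w‖ ≤ r * R) {z : ℂ} (hz : ‖z‖ < R / 2) :
    ‖deriv f z - deriv f 0‖ ≤ 6 * r / R * ‖z‖ := by
  have hR : 0 < R := by linarith [norm_nonneg z]
  have hdiff : DifferentiableOn ℂ (fun w => deriv f w - deriv f 0) (ball 0 (R / 2)) :=
    ((hf.deriv isOpen_ball).mono (ball_subset_ball (by linarith))).sub_const _
  refine norm_le_mul_norm_of_norm_le_mul hdiff (sub_self _) (fun w hw => ?_)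
    (mem_ball_zero_iff.2 hz)
  rw [mem_ball_zero_iff] at hw
  calc ‖deriv f w - deriv f 0‖ ≤ ‖deriv f w‖ + ‖deriv f 0‖ := norm_sub_le _ _
    _ ≤ r * R / (R / 2) + r := add_le_add
        (norm_deriv_le_of_norm_le_mul hf hr (by positivity) (by linarith))
        (norm_deriv_zero_le_of_norm_le_mul hf h0 hr hR)
    _ = 6 * r / R * (R / 2) := by field_simp; ring

theorem norm_deriv_add_sub_deriv_zero_le [CompleteSpace E] {g : ℂ → E} {s : ℝ}
    (hf : DifferentiableOn ℂ f (ball 0 R)) (hg : DifferentiableOn ℂ g (ball 0 R)) (h0 : f 0 = 0)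
    (hr : ∀ w ∈ ball 0 R, ‖f w‖ ≤ r * R) (hs : ∀ w ∈ ball 0 R, ‖g w‖ ≤ s * R) {z : ℂ}
    (hz : ‖z‖ < R / 2) :
    ‖deriv f z + deriv g z - deriv f 0‖ ≤ 6 * r / R * ‖z‖ + 2 * s := by
  have hR : 0 < R := by linarith [norm_nonneg z]
  calc ‖deriv f z + deriv g z - deriv f 0‖ ≤ ‖deriv f z - deriv f 0‖ + ‖deriv g z‖ := by
        rw [add_sub_right_comm]; exact norm_add_le _ _
    _ ≤ 6 * r / R * ‖z‖ + s * R / (R / 2) := add_le_add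
        (norm_deriv_sub_deriv_zero_le hf h0 hr hz)
        (norm_deriv_le_of_norm_le_mul hg hs (by positivity) (by linarith))
    _ = 6 * r / R * ‖z‖ + 2 * s := by field_simp

end CauchyEstimates

theorem norm_le_scaledSup_mul {R : ℝ} {η : ℂ → ℂ} (hR : 0 < R)
    (hη : BddAbove ((fun z => ‖η z‖) '' ball (0 : ℂ) R)) {z : ℂ} (hz : z ∈ ball 0 R) :
    ‖η z‖ ≤ scaledSup R η * R := by
  rw [scaledSup, mul_comm, mul_inv_cancel_left₀ hR.ne']
  exact le_csSup hη ⟨z, hz, rfl⟩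

theorem exists_unique_zero_add_of_mul_lt_sq {η₀ η₁ : ℂ → ℂ} {R r₀ r₁ : ℝ} (hR : 0 < R)
    (hη₀ : DifferentiableOn ℂ η₀ (ball 0 R)) (hη₁ : DifferentiableOn ℂ η₁ (ball 0 R))
    (h0 : η₀ 0 = 0) (hd : deriv η₀ 0 ≠ 0) (hr₀ : ∀ w ∈ ball 0 R, ‖η₀ w‖ ≤ r₀ * R)
    (hr₁ : ∀ w ∈ ball 0 R, ‖η₁ w‖ ≤ r₁ * R) (hsmall : 32 * (r₀ * r₁) < ‖deriv η₀ 0‖ ^ 2) :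
    ∃ x, ‖x‖ * ‖deriv η₀ 0‖ ≤ 2 * r₁ * R ∧ x ∈ ball 0 (‖deriv η₀ 0‖ * R / (16 * r₀)) ∧
      η₀ x + η₁ x = 0 ∧
      ∀ y ∈ closedBall 0 (‖deriv η₀ 0‖ * R / (16 * r₀)), η₀ y + η₁ y = 0 → y = x := by
  set a := ‖deriv η₀ 0‖
  set ρ := a * R / (16 * r₀)
  have ha : 0 < a := norm_pos_iff.2 hd
  have har₀ : a ≤ r₀ := norm_deriv_zero_le_of_norm_le_mul hη₀ h0 hr₀ hR
  have hr₀pos : 0 < r₀ := ha.trans_le har₀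
  have hρ : r₀ * ρ = a * R / 16 := by simp only [ρ]; field_simp
  have hρR : ρ < R / 2 := by nlinarith
  have hderiv : ∀ z ∈ closedBall (0 : ℂ) ρ,
      HasDerivAt (η₀ + η₁) (deriv η₀ z + deriv η₁ z) z := by
    intro z hz
    have hzR : z ∈ ball (0 : ℂ) R :=
      ball_subset_ball (by linarith) ((closedBall_subset_ball hρR) hz)
    exact (hη₀.differentiableAt (isOpen_ball.mem_nhds hzR)).hasDerivAt.add
      (hη₁.differentiableAt (isOpen_ball.mem_nhds hzR)).hasDerivAt
  have hcontr : ∀ z ∈ closedBall (0 : ℂ) ρ,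
      ‖deriv η₀ z + deriv η₁ z - deriv η₀ 0‖ ≤ (1 / 2 : ℝ≥0) * a := by
    intro z hz
    rw [mem_closedBall_zero_iff] at hz
    have hdev := norm_deriv_add_sub_deriv_zero_le hη₀ hη₁ h0 hr₀ hr₁ (hz.trans_lt hρR)
    have : 6 * r₀ / R * ‖z‖ ≤ 3 * a / 8 := by
      rw [div_mul_eq_mul_div, div_le_iff₀ hR]
      nlinarith [mul_le_mul_of_nonneg_left hz hr₀pos.le]
    push_cast
    nlinarith
  have hg0 : (η₀ + η₁) 0 = η₁ 0 := by simp [h0]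
  have hstart : ‖(η₀ + η₁) 0‖ ≤ (1 - (1 / 2 : ℝ≥0)) * a * ρ := by
    have : r₀ * (r₁ * R) ≤ r₀ * (a * ρ / 2) := by
      nlinarith [mul_lt_mul_of_pos_right hsmall hR]
    rw [hg0]
    push_cast
    nlinarith [le_of_mul_le_mul_left this hr₀pos, hr₁ 0 (mem_ball_self hR)]
  obtain ⟨x, hx, hx0, huniq⟩ :=
    exists_unique_zero_of_norm_deriv_sub_le (by norm_num) hd hderiv hcontr hstart
  have hxa : ‖x‖ * a ≤ 2 * r₁ * R := by
    rw [hg0] at hx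
    norm_num at hx
    rw [le_div_iff₀ (by positivity)] at hx
    linarith [hr₁ 0 (mem_ball_self hR)]
  have hxρ : ‖x‖ < ρ := by
    have : r₀ * a * ‖x‖ < r₀ * a * ρ := by nlinarith [mul_lt_mul_of_pos_right hsmall hR]
    exact lt_of_mul_lt_mul_left this (by positivity)
  exact ⟨x, hxa, mem_ball_zero_iff.2 hxρ, hx0, huniq⟩

/-- **Lemma (perturbation of a simple zero).**  There are universal constants `c`
(one may take `c = 1/32`) and `C` such that a perturbation `η₀ + η₁` of `η₀` with
`r₀ r₁ < c |η₀'(0)|²` has a unique zero `x` near `0`, with quantitative bounds. -/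
theorem zero_perturbation :
    ∃ c C : ℝ, 0 < c ∧ 0 < C ∧
      ∀ (R : ℝ) (η₀ η₁ : ℂ → ℂ), 0 < R →
        AnalyticOnNhd ℂ η₀ (ball 0 R) → AnalyticOnNhd ℂ η₁ (ball 0 R) →
        BddAbove ((fun z => ‖η₀ z‖) '' ball (0 : ℂ) R) →
        BddAbove ((fun z => ‖η₁ z‖) '' ball (0 : ℂ) R) →
        η₀ 0 = 0 → deriv η₀ 0 ≠ 0 →
        scaledSup R η₀ * scaledSup R η₁ < c * ‖deriv η₀ 0‖ ^ 2 →
        ∃ x : ℂ,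
          (x ∈ ball (0 : ℂ) (2 * c * (‖deriv η₀ 0‖ / scaledSup R η₀) * R) ∧
            η₀ x + η₁ x = 0) ∧
          (∀ y : ℂ, y ∈ ball (0 : ℂ) (2 * c * (‖deriv η₀ 0‖ / scaledSup R η₀) * R) →
            η₀ y + η₁ y = 0 → y = x) ∧
          ‖x‖ / R ≤ C * scaledSup R η₁ / ‖deriv η₀ 0‖ ∧
          ‖deriv η₀ x + deriv η₁ x - deriv η₀ 0‖ ≤
            C * (scaledSup R η₀ * scaledSup R η₁) / ‖deriv η₀ 0‖ := by
  refine ⟨1 / 32, 14, by norm_num, by norm_num, ?_⟩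
  intro R η₀ η₁ hR hη₀ hη₁ hb₀ hb₁ h0 hd hsmall
  set a := ‖deriv η₀ 0‖
  set r₀ := scaledSup R η₀
  set r₁ := scaledSup R η₁
  have hM₀ := fun w (hw : w ∈ ball (0 : ℂ) R) => norm_le_scaledSup_mul hR hb₀ hw
  have hM₁ := fun w (hw : w ∈ ball (0 : ℂ) R) => norm_le_scaledSup_mul hR hb₁ hw
  have ha : 0 < a := norm_pos_iff.2 hd
  have har₀ : a ≤ r₀ := norm_deriv_zero_le_of_norm_le_mul hη₀.differentiableOn h0 hM₀ hR
  have hr₀ : 0 < r₀ := ha.trans_le har₀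
  have hr₁ : 0 ≤ r₁ :=
    nonneg_of_mul_nonneg_left ((norm_nonneg _).trans (hM₁ 0 (mem_ball_self hR))) hR
  obtain ⟨x, hxa, hxρ, hx0, huniq⟩ := exists_unique_zero_add_of_mul_lt_sq hR
    hη₀.differentiableOn hη₁.differentiableOn h0 hd hM₀ hM₁ (by linarith)
  have hρ : 2 * (1 / 32) * (a / r₀) * R = a * R / (16 * r₀) := by ring
  have hxR : ‖x‖ < R / 2 := by
    have : a * R / (16 * r₀) ≤ R / 16 := by
      rw [div_le_iff₀ (by positivity)]; nlinarith
    linarith [mem_ball_zero_iff.1 hxρ]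
  rw [hρ]
  refine ⟨x, ⟨hxρ, hx0⟩, fun y hy hy0 => huniq y (ball_subset_closedBall hy) hy0, ?_, ?_⟩
  · rw [div_le_div_iff₀ hR ha]
    nlinarith
  · refine (norm_deriv_add_sub_deriv_zero_le hη₀.differentiableOn hη₁.differentiableOn h0
      hM₀ hM₁ hxR).trans ?_
    have : 6 * r₀ / R * ‖x‖ * a ≤ 12 * (r₀ * r₁) := by
      rw [div_mul_eq_mul_div, div_mul_eq_mul_div, div_le_iff₀ hR]
      nlinarith
    rw [le_div_iff₀ ha]
    nlinarith

end
end

section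
/- Let λ > 0 and let ū : D_λ → ℂ be analytic; set u(x,y) = y·ū(x,y). Then for every integer r ≥ 1 and every λ' ∈ (0,λ): |u|^{(λ',r)} ≤ ((r+λ')/(1−λ'/λ))·|ū|^{(λ,r−1)}. In particular |∂u/∂x|^{(λ')} ≤ (λλ'/(λ−λ'))·|ū|^{(λ)} and |∂u/∂y|^{(λ')} ≤ (λ/(λ−λ'))·|ū|^{(λ)}. -/
/-!
On `D_λ` the Leibniz rule gives `∂ₓʲ∂ᵧᵏ(y ū) = y ∂ₓʲ∂ᵧᵏ ū + k ∂ₓʲ∂ᵧᵏ⁻¹ ū`, and the second term is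
at most `k |ū|^{(λ,r-1)}`. In the first term one derivative falls on a derivative of `ū` of order
`≤ r - 1`, and is bounded by Cauchy's estimate on a disc in one variable: around `(x, y) ∈ D_λ'`
the disc in `x` of radius `|y| (1/λ' - 1/λ)` and the disc in `y` of radius `(λ - λ')(1 - |Im x|)`
stay inside `D_λ`. The factor `|y|` compensates exactly the radius of the first disc, and is at
most `λ' (1 - |Im x|)` for the second.
-/

open Real Set ENNReal

noncomputable section

/-- The triangular domain `D_λ = {(x,y) ∈ 𝕋₁ × ℂ : |Im x| + |y|/λ < 1}`. -/
def Dtri (lam : ℝ) : Set (ℂ × ℂ) := {p : ℂ × ℂ | |p.1.im| + ‖p.2‖ / lam < 1}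

/-- `u(·,y)` is 1-periodic in the first variable. -/
def Per1' (u : ℂ × ℂ → ℂ) : Prop := ∀ z w, u (z + 1, w) = u (z, w)

/-- Partial derivative in the first variable. -/
def pdx (u : ℂ × ℂ → ℂ) : ℂ × ℂ → ℂ := fun p => deriv (fun x => u (x, p.2)) p.1

/-- Partial derivative in the second variable. -/
def pdy (u : ℂ × ℂ → ℂ) : ℂ × ℂ → ℂ := fun p => deriv (fun y => u (p.1, y)) p.2

/-- The sup "norm" `|u|^{(λ)}` on `D_λ`, valued in `[0,∞]`. -/
def triSup (lam : ℝ) (u : ℂ × ℂ → ℂ) : ℝ≥0∞ :=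
  ⨆ p ∈ Dtri lam, (‖u p‖₊ : ℝ≥0∞)

/-- The `C^r` "norm" `|u|^{(λ,r)}` on `D_λ`: the supremum of all partial derivatives
`∂^{j+k} u / ∂x^j ∂y^k` with `j + k ≤ r`, valued in `[0,∞]`. -/
def triCr (lam : ℝ) (r : ℕ) (u : ℂ × ℂ → ℂ) : ℝ≥0∞ :=
  ⨆ (j : ℕ) (k : ℕ) (_ : j + k ≤ r), triSup lam (pdx^[j] (pdy^[k] u))

theorem ENNReal.le_ofReal_mul_of_ne_top {a b : ℝ≥0∞} {C : ℝ} (hC : 0 < C)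
    (h : b ≠ ⊤ → a ≤ ENNReal.ofReal (C * b.toReal)) : a ≤ ENNReal.ofReal C * b := by
  by_cases hb : b = ⊤
  · rw [hb, ENNReal.mul_top (ENNReal.ofReal_pos.mpr hC).ne']
    exact le_top
  · calc a ≤ ENNReal.ofReal (C * b.toReal) := h hb
      _ = ENNReal.ofReal C * b := by rw [ENNReal.ofReal_mul hC.le, ENNReal.ofReal_toReal hb]

section SupNorms

variable {lam : ℝ} {f : ℂ × ℂ → ℂ}

theorem triSup_le_ofReal {C : ℝ} (h : ∀ p ∈ Dtri lam, ‖f p‖ ≤ C) :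
    triSup lam f ≤ ENNReal.ofReal C :=
  iSup₂_le fun p hp => by
    rw [← ENNReal.ofReal_coe_nnreal, coe_nnnorm]
    exact ENNReal.ofReal_le_ofReal (h p hp)

theorem norm_le_toReal_triSup (h : triSup lam f ≠ ⊤) {p : ℂ × ℂ} (hp : p ∈ Dtri lam) :
    ‖f p‖ ≤ (triSup lam f).toReal := by
  have hle : (‖f p‖₊ : ℝ≥0∞) ≤ triSup lam f :=
    le_iSup₂ (f := fun p (_ : p ∈ Dtri lam) => (‖f p‖₊ : ℝ≥0∞)) p hp
  simpa using ENNReal.toReal_mono h hle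

theorem triCr_le_ofReal {r : ℕ} {C : ℝ}
    (h : ∀ j k, j + k ≤ r → ∀ p ∈ Dtri lam, ‖pdx^[j] (pdy^[k] f) p‖ ≤ C) :
    triCr lam r f ≤ ENNReal.ofReal C :=
  iSup_le fun j => iSup_le fun k => iSup_le fun hjk => triSup_le_ofReal (h j k hjk)

theorem norm_le_toReal_triCr {r j k : ℕ} (h : triCr lam r f ≠ ⊤) (hjk : j + k ≤ r)
    {p : ℂ × ℂ} (hp : p ∈ Dtri lam) : ‖pdx^[j] (pdy^[k] f) p‖ ≤ (triCr lam r f).toReal := by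
  have hle : triSup lam (pdx^[j] (pdy^[k] f)) ≤ triCr lam r f :=
    le_iSup_of_le j <| le_iSup_of_le k <| le_iSup_of_le hjk le_rfl
  exact (norm_le_toReal_triSup (ne_top_of_le_ne_top h hle) hp).trans (ENNReal.toReal_mono h hle)

end SupNorms

theorem isOpen_Dtri (lam : ℝ) : IsOpen (Dtri lam) :=
  isOpen_lt (by fun_prop) continuous_const

theorem Dtri_subset_Dtri {lam lam' : ℝ} (hlam' : 0 < lam') (h : lam' ≤ lam) :
    Dtri lam' ⊆ Dtri lam := fun p hp => by
  have : ‖p.2‖ / lam ≤ ‖p.2‖ / lam' := div_le_div_of_nonneg_left (norm_nonneg _) hlam' h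
  change |p.1.im| + ‖p.2‖ / lam' < 1 at hp
  change |p.1.im| + ‖p.2‖ / lam < 1
  linarith

/-- Cauchy's estimate, in a form that allows the radius `δ = 0` (the `x`-disc at `y = 0`). -/
theorem mul_norm_deriv_le {f : ℂ → ℂ} {c : ℂ} {δ M : ℝ} (hδ : 0 ≤ δ)
    (hf : DifferentiableOn ℂ f (Metric.closedBall c δ))
    (hM : ∀ z ∈ Metric.closedBall c δ, ‖f z‖ ≤ M) :
    δ * ‖deriv f c‖ ≤ M := by
  rcases hδ.eq_or_lt with rfl | hδ
  · simpa using (norm_nonneg _).trans (hM c (Metric.mem_closedBall_self le_rfl))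
  · rw [← le_div_iff₀' hδ]
    exact Complex.norm_deriv_le_of_forall_mem_sphere_norm_le hδ (hf.diffContOnCl_ball subset_rfl)
      fun z hz => hM z (Metric.sphere_subset_closedBall hz)

section Partials

variable {U : Set (ℂ × ℂ)} {f g : ℂ × ℂ → ℂ} {p : ℂ × ℂ}

theorem AnalyticAt.hasDerivAt_pdx (hf : AnalyticAt ℂ f p) :
    HasDerivAt (fun x => f (x, p.2)) (pdx f p) p.1 :=
  (hf.differentiableAt.comp p.1 (by fun_prop)).hasDerivAt

theorem AnalyticAt.hasDerivAt_pdy (hf : AnalyticAt ℂ f p) :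
    HasDerivAt (fun y => f (p.1, y)) (pdy f p) p.2 :=
  (hf.differentiableAt.comp p.2 (by fun_prop)).hasDerivAt

theorem AnalyticOnNhd.pdx (hf : AnalyticOnNhd ℂ f U) :
    AnalyticOnNhd ℂ (_root_.pdx f) U := fun p hp => by
  have hev : (fun q => fderiv ℂ f q (1, 0)) =ᶠ[nhds p] _root_.pdx f := by
    filter_upwards [(hf p hp).eventually_analyticAt] with q hq
    exact (hq.differentiableAt.hasFDerivAt.comp_hasDerivAt q.1
      ((hasDerivAt_id q.1).prodMk (hasDerivAt_const q.1 q.2))).deriv.symm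
  exact (((ContinuousLinearMap.apply ℂ ℂ ((1 : ℂ), (0 : ℂ))).analyticAt _).comp
    (hf p hp).fderiv).congr hev

theorem AnalyticOnNhd.pdy (hf : AnalyticOnNhd ℂ f U) :
    AnalyticOnNhd ℂ (_root_.pdy f) U := fun p hp => by
  have hev : (fun q => fderiv ℂ f q (0, 1)) =ᶠ[nhds p] _root_.pdy f := by
    filter_upwards [(hf p hp).eventually_analyticAt] with q hq
    exact (hq.differentiableAt.hasFDerivAt.comp_hasDerivAt q.2
      ((hasDerivAt_const q.2 q.1).prodMk (hasDerivAt_id q.2))).deriv.symm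
  exact (((ContinuousLinearMap.apply ℂ ℂ ((0 : ℂ), (1 : ℂ))).analyticAt _).comp
    (hf p hp).fderiv).congr hev

theorem AnalyticOnNhd.iterate_pdx (hf : AnalyticOnNhd ℂ f U) (j : ℕ) :
    AnalyticOnNhd ℂ (_root_.pdx^[j] f) U := by
  induction j with
  | zero => exact hf
  | succ j ih => rw [Function.iterate_succ_apply']; exact ih.pdx

theorem AnalyticOnNhd.iterate_pdy (hf : AnalyticOnNhd ℂ f U) (k : ℕ) :
    AnalyticOnNhd ℂ (_root_.pdy^[k] f) U := by
  induction k with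
  | zero => exact hf
  | succ k ih => rw [Function.iterate_succ_apply']; exact ih.pdy

theorem Set.EqOn.pdx (hU : IsOpen U) (h : EqOn f g U) :
    EqOn (_root_.pdx f) (_root_.pdx g) U := fun p hp =>
  Filter.EventuallyEq.deriv_eq <| Filter.mem_of_superset
    ((hU.preimage (by fun_prop : Continuous fun x : ℂ => (x, p.2))).mem_nhds hp)
    fun _ hx => h hx

theorem Set.EqOn.pdy (hU : IsOpen U) (h : EqOn f g U) :
    EqOn (_root_.pdy f) (_root_.pdy g) U := fun p hp =>
  Filter.EventuallyEq.deriv_eq <| Filter.mem_of_superset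
    ((hU.preimage (by fun_prop : Continuous fun y : ℂ => (p.1, y))).mem_nhds hp)
    fun _ hy => h hy

theorem pdx_snd_mul_add_const_mul (hf : AnalyticAt ℂ f p) (hg : AnalyticAt ℂ g p) (c : ℂ) :
    pdx (fun q => q.2 * f q + c * g q) p = p.2 * pdx f p + c * pdx g p :=
  ((hf.hasDerivAt_pdx.const_mul p.2).add (hg.hasDerivAt_pdx.const_mul c)).deriv

theorem pdy_snd_mul_add_const_mul (hf : AnalyticAt ℂ f p) (hg : AnalyticAt ℂ g p) (c : ℂ) :
    pdy (fun q => q.2 * f q + c * g q) p = f p + p.2 * pdy f p + c * pdy g p := by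
  have h : HasDerivAt (fun y => y * f (p.1, y) + c * g (p.1, y))
      (1 * f p + p.2 * pdy f p + c * pdy g p) p.2 :=
    ((hasDerivAt_id p.2).mul hf.hasDerivAt_pdy).add (hg.hasDerivAt_pdy.const_mul c)
  rw [one_mul] at h
  exact h.deriv

end Partials

section LeibnizFormula

variable {U : Set (ℂ × ℂ)} {f : ℂ × ℂ → ℂ}

/-- At `k = 0` the truncated `k - 1 = 0` is harmless, since its coefficient `k` vanishes. -/
theorem eqOn_iterate_pdy_snd_mul (hU : IsOpen U) (hf : AnalyticOnNhd ℂ f U) (k : ℕ) :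
    EqOn (pdy^[k] fun q => q.2 * f q)
      (fun q => q.2 * pdy^[k] f q + k * pdy^[k - 1] f q) U := by
  induction k with
  | zero => intro q _; simp
  | succ k ih =>
    intro p hp
    rw [Function.iterate_succ_apply', ih.pdy hU hp, pdy_snd_mul_add_const_mul
      (hf.iterate_pdy k p hp) (hf.iterate_pdy (k - 1) p hp)]
    rcases k with _ | k
    · simp [add_comm]
    · simp only [Function.iterate_succ_apply', Nat.add_sub_cancel]
      push_cast
      ring

theorem eqOn_iterate_pdx_snd_mul_add_const_mul (hU : IsOpen U) {F g : ℂ × ℂ → ℂ}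
    (hf : AnalyticOnNhd ℂ f U) (hg : AnalyticOnNhd ℂ g U) {c : ℂ}
    (hF : EqOn F (fun q => q.2 * f q + c * g q) U) (j : ℕ) :
    EqOn (pdx^[j] F) (fun q => q.2 * pdx^[j] f q + c * pdx^[j] g q) U := by
  induction j with
  | zero => exact hF
  | succ j ih =>
    intro p hp
    rw [Function.iterate_succ_apply', ih.pdx hU hp, pdx_snd_mul_add_const_mul
      (hf.iterate_pdx j p hp) (hg.iterate_pdx j p hp),
      Function.iterate_succ_apply', Function.iterate_succ_apply']

theorem eqOn_iterate_pdx_iterate_pdy_snd_mul (hU : IsOpen U) (hf : AnalyticOnNhd ℂ f U)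
    (j k : ℕ) :
    EqOn (pdx^[j] (pdy^[k] fun q => q.2 * f q))
      (fun q => q.2 * pdx^[j] (pdy^[k] f) q + k * pdx^[j] (pdy^[k - 1] f) q) U :=
  eqOn_iterate_pdx_snd_mul_add_const_mul hU (hf.iterate_pdy k) (hf.iterate_pdy (k - 1))
    (eqOn_iterate_pdy_snd_mul hU hf k) j

end LeibnizFormula

section CauchyEstimates

variable {lam lam' M : ℝ} {f : ℂ × ℂ → ℂ} {p : ℂ × ℂ}

theorem norm_snd_mul_pdx_le (hlam' : 0 < lam') (hll : lam' < lam)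
    (hf : AnalyticOnNhd ℂ f (Dtri lam)) (hM : ∀ q ∈ Dtri lam, ‖f q‖ ≤ M) (hp : p ∈ Dtri lam') :
    ‖p.2 * pdx f p‖ ≤ lam * lam' / (lam - lam') * M := by
  have hlam : 0 < lam := hlam'.trans hll
  have hdd : 0 < lam - lam' := sub_pos.2 hll
  set δ := ‖p.2‖ / lam' - ‖p.2‖ / lam with hδ_def
  have hδ : 0 ≤ δ := sub_nonneg.2 (div_le_div_of_nonneg_left (norm_nonneg _) hlam' hll.le)
  have hball : ∀ z ∈ Metric.closedBall p.1 δ, (z, p.2) ∈ Dtri lam := by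
    intro z hz
    rw [Metric.mem_closedBall, dist_eq_norm] at hz
    have him := Complex.abs_im_le_norm (z - p.1)
    rw [Complex.sub_im] at him
    have := abs_sub_abs_le_abs_sub z.im p.1.im
    change |p.1.im| + ‖p.2‖ / lam' < 1 at hp
    change |z.im| + ‖p.2‖ / lam < 1
    linarith
  have hcauchy : δ * ‖pdx f p‖ ≤ M :=
    mul_norm_deriv_le hδ
      (fun z hz => (hf _ (hball z hz)).hasDerivAt_pdx.differentiableAt.differentiableWithinAt)
      fun z hz => hM _ (hball z hz)
  have hy : ‖p.2‖ = lam * lam' / (lam - lam') * δ := by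
    rw [hδ_def]
    field_simp
  rw [norm_mul, hy, mul_assoc]
  gcongr

theorem norm_snd_mul_pdy_le (hlam' : 0 < lam') (hll : lam' < lam)
    (hf : AnalyticOnNhd ℂ f (Dtri lam)) (hM : ∀ q ∈ Dtri lam, ‖f q‖ ≤ M) (hp : p ∈ Dtri lam') :
    ‖p.2 * pdy f p‖ ≤ lam' / (lam - lam') * M := by
  have hlam : 0 < lam := hlam'.trans hll
  have hdd : 0 < lam - lam' := sub_pos.2 hll
  change |p.1.im| + ‖p.2‖ / lam' < 1 at hp
  have hy : ‖p.2‖ < lam' * (1 - |p.1.im|) := by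
    rw [← div_lt_iff₀' hlam']
    linarith
  have him : 0 < 1 - |p.1.im| := by linarith [div_nonneg (norm_nonneg p.2) hlam'.le]
  set δ := (lam - lam') * (1 - |p.1.im|) with hδ_def
  have hδ : 0 ≤ δ := mul_nonneg hdd.le him.le
  have hball : ∀ w ∈ Metric.closedBall p.2 δ, (p.1, w) ∈ Dtri lam := by
    intro w hw
    rw [Metric.mem_closedBall, dist_eq_norm] at hw
    have := norm_sub_norm_le w p.2
    change |p.1.im| + ‖w‖ / lam < 1
    have : ‖w‖ / lam < 1 - |p.1.im| := by
      rw [div_lt_iff₀ hlam]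
      linarith
    linarith
  have hcauchy : δ * ‖pdy f p‖ ≤ M :=
    mul_norm_deriv_le hδ
      (fun w hw => (hf _ (hball w hw)).hasDerivAt_pdy.differentiableAt.differentiableWithinAt)
      fun w hw => hM _ (hball w hw)
  have hyδ : lam' * (1 - |p.1.im|) = lam' / (lam - lam') * δ := by
    rw [hδ_def]
    field_simp
  calc ‖p.2 * pdy f p‖ = ‖p.2‖ * ‖pdy f p‖ := norm_mul _ _
    _ ≤ lam' / (lam - lam') * δ * ‖pdy f p‖ := by rw [← hyδ]; gcongr
    _ ≤ lam' / (lam - lam') * M := by rw [mul_assoc]; gcongr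

end CauchyEstimates

section HigherEstimates

variable {lam lam' M : ℝ} {r : ℕ} {f : ℂ × ℂ → ℂ} {p : ℂ × ℂ}

theorem norm_snd_mul_iterate_pdx_iterate_pdy_le (hr : 1 ≤ r) (hlam' : 0 < lam')
    (hll : lam' < lam) (hf : AnalyticOnNhd ℂ f (Dtri lam))
    (hM : ∀ j k, j + k ≤ r - 1 → ∀ q ∈ Dtri lam, ‖pdx^[j] (pdy^[k] f) q‖ ≤ M)
    {j k : ℕ} (hjk : j + k ≤ r) (hp : p ∈ Dtri lam') :
    ‖p.2 * pdx^[j] (pdy^[k] f) p‖ ≤ (lam * (r + lam') / (lam - lam') - k) * M := by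
  have hlam : 0 < lam := hlam'.trans hll
  have hdd : 0 < lam - lam' := sub_pos.2 hll
  have hpD : p ∈ Dtri lam := Dtri_subset_Dtri hlam' hll.le hp
  have hM0 : 0 ≤ M := (norm_nonneg _).trans (hM 0 0 (Nat.zero_le _) p hpD)
  have hkr : (k : ℝ) ≤ r := by exact_mod_cast (by omega : k ≤ r)
  rcases j with _ | i
  · rcases k with _ | m
    · have hy : ‖p.2‖ ≤ lam' := by
        change |p.1.im| + ‖p.2‖ / lam' < 1 at hp
        rw [← div_le_one hlam']
        linarith [abs_nonneg p.1.im]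
      calc ‖p.2 * f p‖ = ‖p.2‖ * ‖f p‖ := norm_mul _ _
        _ ≤ lam' * M := mul_le_mul hy (hM 0 0 (Nat.zero_le _) p hpD) (norm_nonneg _) hlam'.le
        _ ≤ _ := by
          gcongr
          rw [Nat.cast_zero, sub_zero, le_div_iff₀ hdd]
          nlinarith
    · rw [Function.iterate_zero_apply, Function.iterate_succ_apply']
      refine (norm_snd_mul_pdy_le hlam' hll (hf.iterate_pdy m) (hM 0 m (by omega)) hp).trans ?_
      gcongr
      rw [le_sub_iff_add_le, div_add' _ _ _ hdd.ne', div_le_div_iff_of_pos_right hdd]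
      push_cast at hkr ⊢
      nlinarith
  · rw [Function.iterate_succ_apply']
    refine (norm_snd_mul_pdx_le hlam' hll ((hf.iterate_pdy k).iterate_pdx i)
      (hM i k (by omega)) hp).trans ?_
    gcongr
    rw [le_sub_iff_add_le, div_add' _ _ _ hdd.ne', div_le_div_iff_of_pos_right hdd]
    nlinarith

theorem norm_iterate_pdx_iterate_pdy_snd_mul_le (hr : 1 ≤ r) (hlam' : 0 < lam')
    (hll : lam' < lam) (hf : AnalyticOnNhd ℂ f (Dtri lam))
    (hM : ∀ j k, j + k ≤ r - 1 → ∀ q ∈ Dtri lam, ‖pdx^[j] (pdy^[k] f) q‖ ≤ M)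
    {j k : ℕ} (hjk : j + k ≤ r) (hp : p ∈ Dtri lam') :
    ‖pdx^[j] (pdy^[k] fun q => q.2 * f q) p‖ ≤ lam * (r + lam') / (lam - lam') * M := by
  have hpD : p ∈ Dtri lam := Dtri_subset_Dtri hlam' hll.le hp
  rw [eqOn_iterate_pdx_iterate_pdy_snd_mul (isOpen_Dtri lam) hf j k hpD]
  have hlower : ‖(k : ℂ) * pdx^[j] (pdy^[k - 1] f) p‖ ≤ k * M := by
    rw [norm_mul, Complex.norm_natCast]
    rcases k.eq_zero_or_pos with rfl | hk
    · simp
    · exact mul_le_mul_of_nonneg_left (hM j (k - 1) (by omega) p hpD) k.cast_nonneg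
  calc _ ≤ _ := norm_add_le _ _
    _ ≤ _ := add_le_add (norm_snd_mul_iterate_pdx_iterate_pdy_le hr hlam' hll hf hM hjk hp) hlower
    _ = _ := by ring

theorem norm_pdx_snd_mul_le (hlam' : 0 < lam') (hll : lam' < lam)
    (hf : AnalyticOnNhd ℂ f (Dtri lam)) (hM : ∀ q ∈ Dtri lam, ‖f q‖ ≤ M) (hp : p ∈ Dtri lam') :
    ‖pdx (fun q => q.2 * f q) p‖ ≤ lam * lam' / (lam - lam') * M := by
  have := eqOn_iterate_pdx_iterate_pdy_snd_mul (isOpen_Dtri lam) hf 1 0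
    (Dtri_subset_Dtri hlam' hll.le hp)
  simp only [Function.iterate_one, Function.iterate_zero_apply, CharP.cast_eq_zero, zero_mul,
    add_zero] at this
  rw [this]
  exact norm_snd_mul_pdx_le hlam' hll hf hM hp

theorem norm_pdy_snd_mul_le (hlam' : 0 < lam') (hll : lam' < lam)
    (hf : AnalyticOnNhd ℂ f (Dtri lam)) (hM : ∀ q ∈ Dtri lam, ‖f q‖ ≤ M) (hp : p ∈ Dtri lam') :
    ‖pdy (fun q => q.2 * f q) p‖ ≤ lam / (lam - lam') * M := by
  have hpD : p ∈ Dtri lam := Dtri_subset_Dtri hlam' hll.le hp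
  have := eqOn_iterate_pdx_iterate_pdy_snd_mul (isOpen_Dtri lam) hf 0 1 hpD
  simp only [Function.iterate_one, Function.iterate_zero_apply, Nat.cast_one, one_mul,
    Nat.sub_self] at this
  have hdd : lam - lam' ≠ 0 := (sub_pos.2 hll).ne'
  calc ‖pdy (fun q => q.2 * f q) p‖ ≤ ‖p.2 * pdy f p‖ + ‖f p‖ := this ▸ norm_add_le _ _
    _ ≤ lam' / (lam - lam') * M + M :=
      add_le_add (norm_snd_mul_pdy_le hlam' hll hf hM hp) (hM p hpD)
    _ = lam / (lam - lam') * M := by field_simp; ring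

end HigherEstimates

theorem cauchy_estimates_on_triangular_domain_general
    (lam : ℝ) (ub : ℂ × ℂ → ℂ)
    (hana : AnalyticOnNhd ℂ ub (Dtri lam)) :
    ∀ (r : ℕ), 1 ≤ r → ∀ lam' : ℝ, 0 < lam' → lam' < lam →
      triCr lam' r (fun p => p.2 * ub p) ≤
        ENNReal.ofReal (((r : ℝ) + lam') / (1 - lam' / lam)) * triCr lam (r - 1) ub ∧
      triSup lam' (pdx fun p => p.2 * ub p) ≤
        ENNReal.ofReal (lam * lam' / (lam - lam')) * triSup lam ub ∧
      triSup lam' (pdy fun p => p.2 * ub p) ≤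
        ENNReal.ofReal (lam / (lam - lam')) * triSup lam ub := by
  intro r hr lam' hlam' hll
  have hlam : 0 < lam := hlam'.trans hll
  have hdd : 0 < lam - lam' := sub_pos.2 hll
  have hcoef : ((r : ℝ) + lam') / (1 - lam' / lam) = lam * (r + lam') / (lam - lam') := by
    field_simp
  refine ⟨?_, ?_, ?_⟩
  · rw [hcoef]
    exact ENNReal.le_ofReal_mul_of_ne_top (by positivity) fun htop =>
      triCr_le_ofReal fun _ _ hjk _ hp => norm_iterate_pdx_iterate_pdy_snd_mul_le hr hlam' hll hana
        (fun _ _ hjk _ hq => norm_le_toReal_triCr htop hjk hq) hjk hp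
  · exact ENNReal.le_ofReal_mul_of_ne_top (by positivity) fun htop => triSup_le_ofReal
      fun _ hp => norm_pdx_snd_mul_le hlam' hll hana (fun _ => norm_le_toReal_triSup htop) hp
  · exact ENNReal.le_ofReal_mul_of_ne_top (by positivity) fun htop => triSup_le_ofReal
      fun _ hp => norm_pdy_snd_mul_le hlam' hll hana (fun _ => norm_le_toReal_triSup htop) hp

/-- **Lemma (Cauchy estimates on `D_λ`).** -/
theorem cauchy_estimates_on_triangular_domain
    (lam : ℝ) (hlam : 0 < lam) (ub : ℂ × ℂ → ℂ)
    (hper : Per1' ub) (hana : AnalyticOnNhd ℂ ub (Dtri lam)) :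
    ∀ (r : ℕ), 1 ≤ r → ∀ lam' : ℝ, 0 < lam' → lam' < lam →
      triCr lam' r (fun p => p.2 * ub p) ≤
        ENNReal.ofReal (((r : ℝ) + lam') / (1 - lam' / lam)) * triCr lam (r - 1) ub ∧
      triSup lam' (pdx fun p => p.2 * ub p) ≤
        ENNReal.ofReal (lam * lam' / (lam - lam')) * triSup lam ub ∧
      triSup lam' (pdy fun p => p.2 * ub p) ≤
        ENNReal.ofReal (lam / (lam - lam')) * triSup lam ub :=
  cauchy_estimates_on_triangular_domain_general lam ub hana

end
end
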